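/- arXiv:1904.12446 — 3 statements merged into one kernel-verified Lean document; each statement's English description precedes it below -/
import Mathlib

section
/- Let R : ℕ → ℕ → ℕ satisfy R(0, l) = 0 for all l, R(h, 0) = 0 for all h, and R(h, l) ≤ 1 + n · R(h-1, l-1) + R(h-1, l) for all h, l ≥ 1, where n ≥ 1 is a fixed natural number. Then R(h, l) ≤ n^l · (h+l choose l) - 1 for all h, l. -/
/-!
Show the stronger `R h l + 1 ≤ n ^ l * (h + l).choose l` by induction on `h`. Writing
`B h l = n ^ l * (h + l).choose l`, Pascal's rule gives `B (h+1) (l+1) = n * B (h+1) l + B h (l+1)`,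
and since `B` is monotone in `h` this dominates `n * (R h l + 1) + (R h (l+1) + 1)`, which in turn
dominates `R (h+1) (l+1) + 1` by the recurrence as soon as `n ≥ 1`.
-/

namespace Nat

theorem one_le_pow_mul_choose {n : ℕ} (hn : 1 ≤ n) (h l : ℕ) : 1 ≤ n ^ l * (h + l).choose l :=
  Nat.mul_pos (Nat.pow_pos hn) (Nat.choose_pos (Nat.le_add_left l h))

theorem mul_pow_mul_choose_add_le (n h l : ℕ) :
    n * (n ^ l * (h + l).choose l) + n ^ (l + 1) * (h + (l + 1)).choose (l + 1) ≤
      n ^ (l + 1) * (h + 1 + (l + 1)).choose (l + 1) := by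
  have pascal : (h + 1 + (l + 1)).choose (l + 1) =
      (h + l + 1).choose l + (h + (l + 1)).choose (l + 1) := by
    rw [show h + 1 + (l + 1) = h + l + 1 + 1 by omega, Nat.choose_succ_succ']
    rfl
  have mono : (h + l).choose l ≤ (h + l + 1).choose l := Nat.choose_le_succ _ _
  rw [pascal, Nat.mul_add, ← mul_assoc, ← pow_succ']
  gcongr

theorem add_one_le_pow_mul_choose_of_le_rec {n : ℕ} (hn : 1 ≤ n) {R : ℕ → ℕ → ℕ}
    (h0 : ∀ l, R 0 l = 0) (h0' : ∀ h, R h 0 = 0)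
    (hrec : ∀ h l, R (h + 1) (l + 1) ≤ 1 + n * R h l + R h (l + 1)) :
    ∀ h l, R h l + 1 ≤ n ^ l * (h + l).choose l := by
  intro h
  induction h with
  | zero => intro l; simpa [h0] using one_le_pow_mul_choose hn 0 l
  | succ h ih =>
    rintro (_ | l)
    · simp [h0']
    calc R (h + 1) (l + 1) + 1
        ≤ n * (R h l + 1) + (R h (l + 1) + 1) := by
          have := hrec h l
          nlinarith
      _ ≤ n * (n ^ l * (h + l).choose l) + n ^ (l + 1) * (h + (l + 1)).choose (l + 1) := by
          gcongr
          exacts [ih l, ih (l + 1)]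
      _ ≤ n ^ (l + 1) * (h + 1 + (l + 1)).choose (l + 1) := mul_pow_mul_choose_add_le n h l

end Nat

theorem recurrence_bound (n : ℕ) (hn : 1 ≤ n) (R : ℕ → ℕ → ℕ)
    (h0 : ∀ l, R 0 l = 0) (h0' : ∀ h, R h 0 = 0)
    (hrec : ∀ h l, 1 ≤ h → 1 ≤ l →
      R h l ≤ 1 + n * R (h - 1) (l - 1) + R (h - 1) l) :
    ∀ h l, R h l ≤ n ^ l * Nat.choose (h + l) l - 1 := by
  have hrec' : ∀ h l, R (h + 1) (l + 1) ≤ 1 + n * R h l + R h (l + 1) := fun h l =>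
    hrec (h + 1) (l + 1) (Nat.le_add_left 1 h) (Nat.le_add_left 1 l)
  intro h l
  have := Nat.add_one_le_pow_mul_choose_of_le_rec hn h0 h0' hrec' h l
  omega
end

section
/- Fact (disjoint opponent attractor preserves dominions): if S is a dominion for player P in a game G, and X is a set of nodes of G with S ∩ X = ∅, then S ∩ Atr_{P̄}(G, X) = ∅ and S is a dominion for P in G \ Atr_{P̄}(G, X), where P̄ is the opponent of P. -/
/-!
Testing a dominion strategy against opponents who move to a chosen successor shows that a
`P`-dominion `S` is a trap for the opponent: opponent nodes of `S` have all their successors in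
`S`, and `P`-nodes of `S` have one there. The complement of such a trap is closed under the
opponent's attractor step, so the opponent's attractor of a set outside `S` never enters `S`.
Plays from `S` that follow the dominion strategy therefore avoid the attractor, and they are the
same plays in the subgame.
-/

open Filter

/-- A parity game graph on node set `V`: edges, an owner for each node
(`true` = the player `P` under consideration is Even, `false` = Odd),
and a priority for each node. -/
structure PGame (V : Type*) where
  edge : V → V → Prop
  owner : V → Bool
  prio : V → ℕ

namespace PGame

variable {V : Type*}

/-- The induced subgame `G \ A`: remove all nodes of `A`
and all edges touching `A`. -/
def restrict (G : PGame V) (A : Set V) : PGame V where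
  edge u v := G.edge u v ∧ u ∉ A ∧ v ∉ A
  owner := G.owner
  prio := G.prio

/-- One step of the attractor construction for player `P` and target set `N`:
`F A` consists of `N`, the `P`-nodes with a successor in `A`, and the
opponent nodes all of whose successors are in `A`.  It is a monotone
operator on sets of nodes. -/
def attrOp (G : PGame V) (P : Bool) (N : Set V) : Set V →o Set V where
  toFun A := N ∪ {v | G.owner v = P ∧ ∃ u, G.edge v u ∧ u ∈ A}
      ∪ {v | G.owner v ≠ P ∧ ∀ u, G.edge v u → u ∈ A}
  monotone' := by
    intro A B hAB v hv
    rcases hv with (hv | ⟨h1, u, hu, huA⟩) | ⟨h1, h2⟩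
    · exact Or.inl (Or.inl hv)
    · exact Or.inl (Or.inr ⟨h1, u, hu, hAB huA⟩)
    · exact Or.inr ⟨h1, fun u hu => hAB (h2 u hu)⟩

/-- The attractor of `N` for player `P`: the least fixed point of the
monotone operator `attrOp G P N`. -/
def Atr (G : PGame V) (P : Bool) (N : Set V) : Set V :=
  OrderHom.lfp (attrOp G P N)

/-- The history (as a list of visited nodes) of the play starting at `v`
in which player `P` uses strategy `σ` and the opponent uses strategy `τ`
(strategies map the history so far to the chosen next node). -/
def histList (G : PGame V) (P : Bool) (σ τ : List V → V) (v : V) : ℕ → List V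
  | 0 => [v]
  | i + 1 =>
      let l := histList G P σ τ v i
      l ++ [if G.owner (l.getLast?.getD v) = P then σ l else τ l]

/-- The node visited at time `i` by the play starting at `v` in which
player `P` uses strategy `σ` and the opponent uses strategy `τ`. -/
def play (G : PGame V) (P : Bool) (σ τ : List V → V) (v : V) (i : ℕ) : V :=
  (histList G P σ τ v i).getLast?.getD v

/-- The parity winning condition for player `P` (Even if `P = true`,
Odd if `P = false`): the highest priority seen infinitely often, i.e. the
limit superior of the sequence of priorities, has the parity of `P`. -/
def WinsParity (G : PGame V) (P : Bool) (ρ : ℕ → V) : Prop :=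
  (Filter.limsup (fun i => G.prio (ρ i)) Filter.atTop) % 2 = (if P then 0 else 1)

/-- Along the play from `v` determined by `σ` and `τ`, player `P`
always makes legal moves (i.e. moves along edges of `G`). -/
def PLegal (G : PGame V) (P : Bool) (σ τ : List V → V) (v : V) : Prop :=
  ∀ i, G.owner (play G P σ τ v i) = P →
    G.edge (play G P σ τ v i) (play G P σ τ v (i + 1))

/-- Along the play from `v` determined by `σ` and `τ`, the opponent of `P`
always makes legal moves. -/
def OppLegal (G : PGame V) (P : Bool) (σ τ : List V → V) (v : V) : Prop :=
  ∀ i, G.owner (play G P σ τ v i) ≠ P →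
    G.edge (play G P σ τ v i) (play G P σ τ v (i + 1))

/-- `S` is a dominion for player `P` in `G`: from every node of `S`,
player `P` has a strategy `σ` such that, against every opponent strategy
`τ` whose moves along the resulting play are legal, `σ`'s moves are legal,
the play stays in `S` forever, and `P` wins the parity condition. -/
def Dominion (G : PGame V) (P : Bool) (S : Set V) : Prop :=
  ∀ v ∈ S, ∃ σ : List V → V, ∀ τ : List V → V,
    OppLegal G P σ τ v →
      PLegal G P σ τ v ∧ (∀ i, play G P σ τ v i ∈ S) ∧
        WinsParity G P (play G P σ τ v)

/-- The winning region of player `P` in `G`: the set of nodes from which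
`P` has a strategy `σ` such that, against every opponent strategy whose
moves along the resulting play are legal, `σ`'s moves are legal and `P`
wins the parity condition. -/
def WinRegion (G : PGame V) (P : Bool) : Set V :=
  {v | ∃ σ : List V → V, ∀ τ : List V → V,
    OppLegal G P σ τ v →
      PLegal G P σ τ v ∧ WinsParity G P (play G P σ τ v)}

end PGame

namespace PGame

variable {V : Type*}

/-- `S` is a trap for player `Q`: `Q` cannot leave `S`, and the other player need not. -/
def IsTrap (G : PGame V) (Q : Bool) (S : Set V) : Prop :=
  ∀ v ∈ S, (G.owner v = Q → ∀ u, G.edge v u → u ∈ S) ∧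
    (G.owner v ≠ Q → ∃ u, G.edge v u ∧ u ∈ S)

theorem IsTrap.disjoint_atr {G : PGame V} {Q : Bool} {S X : Set V} (hS : IsTrap G Q S)
    (hX : Disjoint S X) : Disjoint S (Atr G Q X) := by
  rw [disjoint_comm, ← Set.subset_compl_iff_disjoint_right]
  refine OrderHom.lfp_le _ fun v hv hvS => ?_
  obtain ⟨hstay, hcan⟩ := hS v hvS
  rcases hv with (hvX | ⟨hown, u, hu, huS⟩) | ⟨hown, hall⟩
  · exact hX.ne_of_mem hvS hvX rfl
  · exact huS (hstay hown u hu)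
  · obtain ⟨u, hu, huS⟩ := hcan hown
    exact hall u hu huS

section Play

variable (G : PGame V) (P : Bool) (σ τ : List V → V) (v : V)

@[simp]
theorem histList_restrict (A : Set V) : histList (G.restrict A) = histList G := by
  funext P σ τ v i
  induction i with
  | zero => rfl
  | succ n ih => simp only [histList, ih]; rfl

@[simp]
theorem play_restrict (A : Set V) : play (G.restrict A) = play G := by
  funext P σ τ v i
  simp only [play, histList_restrict]

theorem play_succ (i : ℕ) :
    play G P σ τ v (i + 1) = if G.owner (play G P σ τ v i) = P then σ (histList G P σ τ v i)
      else τ (histList G P σ τ v i) := by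
  simp only [play, histList, List.getLast?_concat, Option.getD_some]
  rfl

theorem oppLegal_positional (f : V → V) (hf : ∀ w, G.edge w (f w)) :
    OppLegal G P σ (fun l => f (l.getLast?.getD v)) v := by
  intro i hi
  rw [play_succ, if_neg hi]
  exact hf _

end Play

variable {G : PGame V} {P : Bool} {S : Set V}

theorem Dominion.exists_edge_mem (hsucc : ∀ v, ∃ u, G.edge v u) (hS : Dominion G P S)
    {v : V} (hv : v ∈ S) (hown : G.owner v = P) : ∃ u, G.edge v u ∧ u ∈ S := by
  choose next hnext using hsucc
  obtain ⟨σ, hσ⟩ := hS v hv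
  obtain ⟨hlegal, hmem, -⟩ := hσ _ (oppLegal_positional G P σ v next hnext)
  exact ⟨_, hlegal 0 hown, hmem 1⟩

theorem Dominion.mem_of_edge (hsucc : ∀ v, ∃ u, G.edge v u) (hS : Dominion G P S)
    {v u : V} (hv : v ∈ S) (hown : G.owner v ≠ P) (hu : G.edge v u) : u ∈ S := by
  classical
  choose next hnext using hsucc
  obtain ⟨σ, hσ⟩ := hS v hv
  have hf : ∀ w, G.edge w (Function.update next v u w) := by
    intro w
    by_cases hw : w = v
    · subst hw; simpa using hu
    · simpa [hw] using hnext w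
  have hmem := (hσ _ (oppLegal_positional G P σ v _ hf)).2.1 1
  simpa [play, histList, hown] using hmem

theorem Dominion.isTrap (hsucc : ∀ v, ∃ u, G.edge v u) (hS : Dominion G P S) :
    IsTrap G (!P) S := fun _ hv =>
  ⟨fun hown _ hu => hS.mem_of_edge hsucc hv (Bool.eq_not_iff.mp hown) hu,
    fun hown => hS.exists_edge_mem hsucc hv (by simpa using hown)⟩

theorem Dominion.restrict (hS : Dominion G P S) {A : Set V} (hA : Disjoint S A) :
    Dominion (G.restrict A) P S := by
  intro v hv
  obtain ⟨σ, hσ⟩ := hS v hv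
  refine ⟨σ, fun τ hτ => ?_⟩
  simp only [OppLegal, PLegal, WinsParity, play_restrict] at hτ ⊢
  obtain ⟨hlegal, hmem, hwin⟩ := hσ τ fun i hi => (hτ i hi).1
  have hnA : ∀ i, play G P σ τ v i ∉ A := fun i => hA.notMem_of_mem_left (hmem i)
  exact ⟨fun i hi => ⟨hlegal i hi, hnA i, hnA (i + 1)⟩, hmem, hwin⟩

end PGame

theorem dominion_remove_opponent_attractor_general {V : Type*}
    (G : PGame V) (hsucc : ∀ v, ∃ u, G.edge v u)
    (P : Bool) (S X : Set V)
    (hS : PGame.Dominion G P S) (hdisj : S ∩ X = ∅) :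
    S ∩ PGame.Atr G (!P) X = ∅ ∧
      PGame.Dominion (G.restrict (PGame.Atr G (!P) X)) P S := by
  have hA : Disjoint S (PGame.Atr G (!P) X) :=
    (hS.isTrap hsucc).disjoint_atr (Set.disjoint_iff_inter_eq_empty.mpr hdisj)
  exact ⟨Set.disjoint_iff_inter_eq_empty.mp hA, hS.restrict hA⟩

/-- Fact 2 of the paper: if `S` is a dominion for `P` and `X` is disjoint
from `S`, then `S` does not meet the opponent's attractor of `X`, and `S`
is still a dominion for `P` in the subgame obtained by removing the
opponent's attractor of `X`. -/
theorem dominion_remove_opponent_attractor {V : Type*} [Fintype V]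
    (G : PGame V) (hsucc : ∀ v, ∃ u, G.edge v u)
    (hnoself : ∀ v, ¬ G.edge v v) (P : Bool) (S X : Set V)
    (hS : PGame.Dominion G P S) (hdisj : S ∩ X = ∅) :
    S ∩ PGame.Atr G (!P) X = ∅ ∧
      PGame.Dominion (G.restrict (PGame.Atr G (!P) X)) P S :=
  dominion_remove_opponent_attractor_general G hsucc P S X hS hdisj
end

section
/- Zielonka decomposition step: let G be a finite parity game with highest priority h even, N_h the set of nodes of priority h, A = Atr_E(G, N_h), and H = G \ A. If the winning region of Odd in H (with priorities bounded by h−1) is empty, then Even wins from every node of G. -/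
open Filter

/-!
Finite parity games are positionally determined (Zielonka's recursion on the set of nodes), so
in `H` Even has a positional dominion on every node that is not a winning node of Odd, i.e. on all
of `H`. In `G`, Even plays this strategy outside `A` and moves down the attractor ranks inside `A`.
A play that enters `A` infinitely often then visits priority `h` infinitely often, and a play that
eventually stays outside `A` is eventually a play of `H` consistent with Even's winning strategy
there; in both cases the maximal priority seen infinitely often is even.
-/

open Set

namespace PGame

variable {V : Type*} {G : PGame V} {P : Bool} {f g : V → V} {ρ : ℕ → V}

def Conforms (G : PGame V) (P : Bool) (f : V → V) (ρ : ℕ → V) : Prop :=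
  ∀ i, (G.owner (ρ i) = P → ρ (i + 1) = f (ρ i)) ∧
    (G.owner (ρ i) ≠ P → G.edge (ρ i) (ρ (i + 1)))

theorem Conforms.shift (hρ : Conforms G P f ρ) (k : ℕ) :
    Conforms G P f (fun i => ρ (i + k)) := fun i => by
  simpa only [Nat.add_right_comm i 1 k] using hρ (i + k)

theorem Conforms.congr {D : Set V} (hρ : Conforms G P f ρ) (hD : ∀ i, ρ i ∈ D)
    (hfg : EqOn f g D) : Conforms G P g ρ := fun i =>
  ⟨fun ho => ((hρ i).1 ho).trans (hfg (hD i)), (hρ i).2⟩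

theorem Conforms.restrict {A : Set V} (hρ : Conforms G P f ρ) (hA : ∀ i, ρ i ∉ A) :
    Conforms (G.restrict A) P f ρ := fun i =>
  ⟨(hρ i).1, fun ho => ⟨(hρ i).2 ho, hA i, hA (i + 1)⟩⟩

theorem winsParity_shift_iff (k : ℕ) :
    WinsParity G P (fun i => ρ (i + k)) ↔ WinsParity G P ρ := by
  simp only [WinsParity, limsup_nat_add (fun i => G.prio (ρ i)) k]

structure Confines (G : PGame V) (P : Bool) (f : V → V) (D : Set V) : Prop where
  edge_strat : ∀ v ∈ D, G.owner v = P → G.edge v (f v)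
  strat_mem : ∀ v ∈ D, G.owner v = P → f v ∈ D
  mem_of_edge : ∀ v ∈ D, G.owner v ≠ P → ∀ u, G.edge v u → u ∈ D

theorem Confines.mem {D : Set V} (hD : Confines G P f D) (hρ : Conforms G P f ρ)
    (h0 : ρ 0 ∈ D) : ∀ i, ρ i ∈ D
  | 0 => h0
  | i + 1 => by
    by_cases ho : G.owner (ρ i) = P
    · rw [(hρ i).1 ho]
      exact hD.strat_mem _ (hD.mem hρ h0 i) ho
    · exact hD.mem_of_edge _ (hD.mem hρ h0 i) ho _ ((hρ i).2 ho)

theorem Confines.congr {D : Set V} (hD : Confines G P f D) (hfg : EqOn f g D) :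
    Confines G P g D where
  edge_strat v hv ho := hfg hv ▸ hD.edge_strat v hv ho
  strat_mem v hv ho := hfg hv ▸ hD.strat_mem v hv ho
  mem_of_edge := hD.mem_of_edge

/-- The positional counterpart of `Dominion`. -/
structure PosDominion (G : PGame V) (P : Bool) (f : V → V) (D : Set V) : Prop
    extends Confines G P f D where
  wins : ∀ ρ, Conforms G P f ρ → ρ 0 ∈ D → WinsParity G P ρ

theorem PosDominion.empty (G : PGame V) (P : Bool) (f : V → V) : PosDominion G P f ∅ where
  edge_strat _ h := h.elim
  strat_mem _ h := h.elim
  mem_of_edge _ h := h.elim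
  wins _ _ h := h.elim

theorem PosDominion.subset_winRegion {D : Set V} (hD : PosDominion G P f D) :
    D ⊆ WinRegion G P := by
  intro v hv
  refine ⟨fun l => f (l.getLast?.getD v), fun τ hτ => ?_⟩
  have hρ : Conforms G P f (play G P _ τ v) := fun i =>
    ⟨fun ho => by simp only [play] at ho ⊢; simp [histList, ho], hτ i⟩
  have hmem := hD.mem hρ (by simpa [play, histList] using hv)
  refine ⟨fun i ho => ?_, hD.wins _ hρ (by simpa [play, histList] using hv)⟩
  rw [(hρ i).1 ho]
  exact hD.edge_strat _ (hmem i) ho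

theorem PosDominion.winsParity_of_mem {D : Set V} (hD : PosDominion G P f D)
    (hρ : Conforms G P g ρ) (hgf : EqOn g f D) {j : ℕ} (hj : ρ j ∈ D) : WinsParity G P ρ := by
  have hmem := (hD.congr hgf.symm).mem (hρ.shift j) (by simpa using hj)
  exact (winsParity_shift_iff j).1 <|
    hD.wins _ ((hρ.shift j).congr hmem hgf) (by simpa using hj)

theorem PosDominion.inter {D S : Set V} (hD : PosDominion G P f D)
    (hS : ∀ u ∈ S, ∀ v, G.edge u v → v ∈ S) : PosDominion G P f (D ∩ S) where
  edge_strat v hv ho := hD.edge_strat v hv.1 ho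
  strat_mem v hv ho := ⟨hD.strat_mem v hv.1 ho, hS v hv.2 _ (hD.edge_strat v hv.1 ho)⟩
  mem_of_edge v hv ho u hu := ⟨hD.mem_of_edge v hv.1 ho u hu, hS v hv.2 u hu⟩
  wins ρ hρ h0 := hD.wins ρ hρ h0.1

theorem PosDominion.of_restrict {A D : Set V} (hD : PosDominion (G.restrict A) P f D)
    (hDA : D ⊆ Aᶜ) (hA : ∀ v ∉ A, G.owner v ≠ P → ∀ u, G.edge v u → u ∉ A) :
    PosDominion G P f D := by
  have hconf : Confines G P f D :=
    { edge_strat := fun v hv ho => (hD.edge_strat v hv ho).1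
      strat_mem := hD.strat_mem
      mem_of_edge := fun v hv ho u hu =>
        hD.mem_of_edge v hv ho u ⟨hu, hDA hv, hA v (hDA hv) ho u hu⟩ }
  refine { hconf with wins := fun ρ hρ h0 => hD.wins ρ (hρ.restrict fun i => ?_) h0 }
  exact hDA (hconf.mem hρ h0 i)

/-- The opponent can only escape from `D₂` into `D₁`. -/
theorem PosDominion.union_restrict {D₁ D₂ : Set V} {f₁ f₂ : V → V} [DecidablePred (· ∈ D₁)]
    (hD₁ : PosDominion G P f₁ D₁) (hD₂ : PosDominion (G.restrict D₁) P f₂ D₂) :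
    PosDominion G P (D₁.piecewise f₁ f₂) (D₁ ∪ D₂) := by
  have hconf : Confines G P (D₁.piecewise f₁ f₂) (D₁ ∪ D₂) := by
    refine ⟨fun v hv ho => ?_, fun v hv ho => ?_, fun v hv ho u hu => ?_⟩ <;>
      by_cases hv₁ : v ∈ D₁
    · rw [piecewise_eq_of_mem _ _ _ hv₁]
      exact hD₁.edge_strat v hv₁ ho
    · rw [piecewise_eq_of_notMem _ _ _ hv₁]
      exact (hD₂.edge_strat v (hv.resolve_left hv₁) ho).1
    · rw [piecewise_eq_of_mem _ _ _ hv₁]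
      exact Or.inl (hD₁.strat_mem v hv₁ ho)
    · rw [piecewise_eq_of_notMem _ _ _ hv₁]
      exact Or.inr (hD₂.strat_mem v (hv.resolve_left hv₁) ho)
    · exact Or.inl (hD₁.mem_of_edge v hv₁ ho u hu)
    · by_cases hu₁ : u ∈ D₁
      · exact Or.inl hu₁
      · exact Or.inr (hD₂.mem_of_edge v (hv.resolve_left hv₁) ho u ⟨hu, hv₁, hu₁⟩)
  refine { hconf with wins := fun ρ hρ h0 => ?_ }
  by_cases hhit : ∃ j, ρ j ∈ D₁
  · obtain ⟨j, hj⟩ := hhit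
    exact hD₁.winsParity_of_mem hρ (D₁.piecewise_eqOn f₁ f₂) hj
  · simp only [not_exists] at hhit
    have hρ₂ := (hρ.congr (D := D₁ᶜ) hhit (D₁.piecewise_eqOn_compl f₁ f₂)).restrict hhit
    exact hD₂.wins ρ hρ₂ ((hconf.mem hρ h0 0).resolve_left (hhit 0))

variable {N : Set V} {u v : V}

def attrStage (G : PGame V) (P : Bool) (N : Set V) (m : ℕ) : Set V :=
  (attrOp G P N)^[m] ∅

theorem attrStage_succ (m : ℕ) :
    attrStage G P N (m + 1) = attrOp G P N (attrStage G P N m) :=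
  Function.iterate_succ_apply' _ _ _

theorem attrStage_mono : Monotone (attrStage G P N) := by
  refine monotone_nat_of_le_succ fun m => ?_
  induction m with
  | zero => exact empty_subset _
  | succ m ih =>
    rw [attrStage_succ, attrStage_succ (m + 1)]
    exact (attrOp G P N).monotone ih

theorem attrStage_subset_atr (m : ℕ) : attrStage G P N m ⊆ Atr G P N := by
  induction m with
  | zero => exact empty_subset _
  | succ m ih =>
    rw [attrStage_succ, Atr, ← OrderHom.map_lfp (attrOp G P N)]
    exact (attrOp G P N).monotone ih

theorem mem_atr_of_mem_attrOp (hv : v ∈ attrOp G P N (Atr G P N)) : v ∈ Atr G P N := by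
  rwa [Atr, ← OrderHom.map_lfp (attrOp G P N)]

theorem subset_atr : N ⊆ Atr G P N := fun _ hv => mem_atr_of_mem_attrOp (Or.inl (Or.inl hv))

theorem notMem_atr_of_edge (hv : v ∉ Atr G P N) (ho : G.owner v = P) (he : G.edge v u) :
    u ∉ Atr G P N := fun hu => hv (mem_atr_of_mem_attrOp (Or.inl (Or.inr ⟨ho, u, he, hu⟩)))

theorem exists_edge_notMem_atr (hv : v ∉ Atr G P N) (ho : G.owner v ≠ P) :
    ∃ u, G.edge v u ∧ u ∉ Atr G P N := by
  by_contra! hall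
  exact hv (mem_atr_of_mem_attrOp (Or.inr ⟨ho, hall⟩))

/-- Finiteness matters for opponent nodes: all their successors must enter a common stage. -/
theorem atr_subset_iUnion_attrStage [Finite V] : Atr G P N ⊆ ⋃ m, attrStage G P N m := by
  refine OrderHom.lfp_le _ fun v hv => ?_
  simp only [mem_iUnion]
  rcases hv with (hv | ⟨ho, u, he, hu⟩) | ⟨ho, hall⟩
  · exact ⟨1, Or.inl (Or.inl hv)⟩
  · obtain ⟨m, hm⟩ := mem_iUnion.1 hu
    exact ⟨m + 1, by rw [attrStage_succ]; exact Or.inl (Or.inr ⟨ho, u, he, hm⟩)⟩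
  · have hev : ∀ᶠ m in atTop, ∀ u, G.edge v u → u ∈ attrStage G P N m := by
      refine eventually_all.2 fun u => ?_
      by_cases he : G.edge v u
      · obtain ⟨m, hm⟩ := mem_iUnion.1 (hall u he)
        exact eventually_atTop.2 ⟨m, fun n hn _ => attrStage_mono hn hm⟩
      · exact Eventually.of_forall fun _ he' => (he he').elim
    obtain ⟨m, hm⟩ := hev.exists
    exact ⟨m + 1, by rw [attrStage_succ]; exact Or.inr ⟨ho, hm⟩⟩

/-- Nodes outside the attractor get the junk rank `sInf ∅ = 0`; nodes inside have positive rank,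
as stage `0` is empty. -/
noncomputable def attrRank (G : PGame V) (P : Bool) (N : Set V) (v : V) : ℕ :=
  sInf {m | v ∈ attrStage G P N m}

theorem attrRank_le {m : ℕ} (h : v ∈ attrStage G P N m) : attrRank G P N v ≤ m :=
  Nat.sInf_le h

theorem mem_attrOp_attrStage_of_mem_atr [Finite V] (hv : v ∈ Atr G P N) :
    ∃ r, attrRank G P N v = r + 1 ∧ v ∈ attrOp G P N (attrStage G P N r) := by
  have hrank : v ∈ attrStage G P N (attrRank G P N v) :=
    Nat.sInf_mem (mem_iUnion.1 (atr_subset_iUnion_attrStage hv))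
  obtain ⟨r, hr⟩ := Nat.exists_eq_succ_of_ne_zero (n := attrRank G P N v) fun h0 => by
    simp [h0, attrStage] at hrank
  rw [hr, attrStage_succ] at hrank
  exact ⟨r, hr, hrank⟩

theorem exists_edge_attrRank_lt [Finite V] (hv : v ∈ Atr G P N) (hvN : v ∉ N)
    (ho : G.owner v = P) :
    ∃ u, G.edge v u ∧ u ∈ Atr G P N ∧ attrRank G P N u < attrRank G P N v := by
  obtain ⟨r, hr, (hN | ⟨-, u, he, hu⟩) | ⟨hno, -⟩⟩ := mem_attrOp_attrStage_of_mem_atr hv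
  · exact (hvN hN).elim
  · exact ⟨u, he, attrStage_subset_atr r hu, hr ▸ Nat.lt_succ_of_le (attrRank_le hu)⟩
  · exact (hno ho).elim

theorem attrRank_lt_of_edge [Finite V] (hv : v ∈ Atr G P N) (hvN : v ∉ N)
    (ho : G.owner v ≠ P) (he : G.edge v u) :
    u ∈ Atr G P N ∧ attrRank G P N u < attrRank G P N v := by
  obtain ⟨r, hr, (hN | ⟨hyes, -⟩) | ⟨-, hall⟩⟩ := mem_attrOp_attrStage_of_mem_atr hv
  · exact (hvN hN).elim
  · exact (ho hyes).elim
  · exact ⟨attrStage_subset_atr r (hall u he), hr ▸ Nat.lt_succ_of_le (attrRank_le (hall u he))⟩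

structure IsAttrStrategy (G : PGame V) (P : Bool) (N : Set V) (f : V → V) : Prop where
  edge : ∀ v, (∃ u, G.edge v u) → G.edge v (f v)
  rank_lt : ∀ v ∈ Atr G P N, v ∉ N → G.owner v = P →
    f v ∈ Atr G P N ∧ attrRank G P N (f v) < attrRank G P N v

theorem exists_isAttrStrategy [Finite V] (G : PGame V) (P : Bool) (N : Set V) :
    ∃ f, IsAttrStrategy G P N f := by
  have hmove : ∀ v, ∃ u, ((∃ u, G.edge v u) → G.edge v u) ∧
      (v ∈ Atr G P N → v ∉ N → G.owner v = P →
        u ∈ Atr G P N ∧ attrRank G P N u < attrRank G P N v) := by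
    intro v
    by_cases hv : v ∈ Atr G P N ∧ v ∉ N ∧ G.owner v = P
    · obtain ⟨u, he, hu⟩ := exists_edge_attrRank_lt hv.1 hv.2.1 hv.2.2
      exact ⟨u, fun _ => he, fun _ _ _ => hu⟩
    · by_cases he : ∃ u, G.edge v u
      · obtain ⟨u, hu⟩ := he
        exact ⟨u, fun _ => hu, fun h1 h2 h3 => (hv ⟨h1, h2, h3⟩).elim⟩
      · exact ⟨v, fun h => (he h).elim, fun h1 h2 h3 => (hv ⟨h1, h2, h3⟩).elim⟩
  choose f hf₁ hf₂ using hmove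
  exact ⟨f, hf₁, hf₂⟩

theorem Conforms.exists_mem_of_mem_atr [Finite V] {fA : V → V} (hρ : Conforms G P g ρ)
    (hfA : IsAttrStrategy G P N fA) (hg : EqOn g fA (Atr G P N \ N)) {i : ℕ}
    (hi : ρ i ∈ Atr G P N) : ∃ j ≥ i, ρ j ∈ N := by
  induction hr : attrRank G P N (ρ i) using Nat.strong_induction_on generalizing i with
  | _ r ih =>
  by_cases hN : ρ i ∈ N
  · exact ⟨i, le_rfl, hN⟩
  have hnext : ρ (i + 1) ∈ Atr G P N ∧ attrRank G P N (ρ (i + 1)) < r := by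
    by_cases ho : G.owner (ρ i) = P
    · rw [(hρ i).1 ho, hg ⟨hi, hN⟩, ← hr]
      exact hfA.rank_lt _ hi hN ho
    · exact hr ▸ attrRank_lt_of_edge hi hN ho ((hρ i).2 ho)
  obtain ⟨j, hj, hjN⟩ := ih _ hnext.2 hnext.1 rfl
  exact ⟨j, by omega, hjN⟩

theorem PosDominion.atr [Finite V] {W : Set V} {fW fA : V → V} [DecidablePred (· ∈ W)]
    (hW : PosDominion G P fW W) (hfA : IsAttrStrategy G P W fA) :
    PosDominion G P (W.piecewise fW fA) (Atr G P W) := by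
  have hconf : Confines G P (W.piecewise fW fA) (Atr G P W) := by
    refine ⟨fun v hv ho => ?_, fun v hv ho => ?_, fun v hv ho u hu => ?_⟩ <;>
      by_cases hvW : v ∈ W
    · rw [piecewise_eq_of_mem _ _ _ hvW]
      exact hW.edge_strat v hvW ho
    · rw [piecewise_eq_of_notMem _ _ _ hvW]
      obtain ⟨u, hu, -⟩ := exists_edge_attrRank_lt hv hvW ho
      exact hfA.edge v ⟨u, hu⟩
    · rw [piecewise_eq_of_mem _ _ _ hvW]
      exact subset_atr (hW.strat_mem v hvW ho)
    · rw [piecewise_eq_of_notMem _ _ _ hvW]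
      exact (hfA.rank_lt v hv hvW ho).1
    · exact subset_atr (hW.mem_of_edge v hvW ho u hu)
    · exact (attrRank_lt_of_edge hv hvW ho hu).1
  refine { hconf with wins := fun ρ hρ h0 => ?_ }
  obtain ⟨j, -, hj⟩ :=
    hρ.exists_mem_of_mem_atr hfA ((W.piecewise_eqOn_compl fW fA).mono fun _ hv => hv.2) h0
  exact hW.winsParity_of_mem hρ (W.piecewise_eqOn fW fA) hj

structure IsArena (G : PGame V) (S : Set V) : Prop where
  mem_of_edge : ∀ u ∈ S, ∀ v, G.edge u v → v ∈ S
  exists_edge : ∀ v ∈ S, ∃ u, G.edge v u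

theorem IsArena.restrict_atr {S : Set V} (hS : IsArena G S) :
    IsArena (G.restrict (Atr G P N)) (S \ Atr G P N) where
  mem_of_edge _ hu _ he := ⟨hS.mem_of_edge _ hu.1 _ he.1, he.2.2⟩
  exists_edge v hv := by
    by_cases ho : G.owner v = P
    · obtain ⟨u, hu⟩ := hS.exists_edge v hv.1
      exact ⟨u, hu, hv.2, notMem_atr_of_edge hv.2 ho hu⟩
    · obtain ⟨u, hu, huA⟩ := exists_edge_notMem_atr hv.2 ho
      exact ⟨u, hu, hv.2, huA⟩

theorem limsup_eq_of_frequently_eq {u : ℕ → ℕ} {p : ℕ} (hle : ∀ i, u i ≤ p)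
    (hfreq : ∃ᶠ i in atTop, u i = p) : limsup u atTop = p :=
  le_antisymm (limsup_le_of_le isCobounded_le_of_bot (Eventually.of_forall hle))
    (le_limsup_of_frequently_le (hfreq.mono fun _ h => h.ge)
      (isBoundedUnder_of ⟨p, hle⟩))

/-- Priority `p` is maximal along the play, and every visit to the attractor is followed by a
visit to priority `p`. -/
theorem Conforms.winsParity_of_frequently_mem_atr [Finite V] {fA : V → V} {p : ℕ}
    (hρ : Conforms G P g ρ) (hfA : IsAttrStrategy G P {v | G.prio v = p} fA)
    (hg : EqOn g fA (Atr G P {v | G.prio v = p})) (hp : ∀ i, G.prio (ρ i) ≤ p)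
    (hP : p % 2 = if P then 0 else 1) (hinf : ∃ᶠ i in atTop, ρ i ∈ Atr G P {v | G.prio v = p}) :
    WinsParity G P ρ := by
  have hfreq : ∃ᶠ i in atTop, G.prio (ρ i) = p := frequently_atTop.2 fun i => by
    obtain ⟨j, hij, hj⟩ := frequently_atTop.1 hinf i
    obtain ⟨k, hjk, hk⟩ := hρ.exists_mem_of_mem_atr hfA (hg.mono sdiff_subset) hj
    exact ⟨k, hij.trans hjk, hk⟩
  rw [WinsParity, limsup_eq_of_frequently_eq hp hfreq, hP]

/-- Zielonka's first case. A play either visits the attractor infinitely often or ends in the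
subgame. -/
theorem exists_posDominion_of_top_attractor [Finite V] {S : Set V} {p : ℕ}
    (hS : IsArena G S) (hp : ∀ v ∈ S, G.prio v ≤ p) (hP : p % 2 = if P then 0 else 1)
    (hH : PosDominion (G.restrict (Atr G P {v | G.prio v = p})) P f
      (S \ Atr G P {v | G.prio v = p})) :
    ∃ g, PosDominion G P g S := by
  classical
  set A := Atr G P {v | G.prio v = p}
  obtain ⟨fA, hfA⟩ := exists_isAttrStrategy G P {v | G.prio v = p}
  have hconf : Confines G P (A.piecewise fA f) S := by
    have hedge : ∀ v ∈ S, G.owner v = P → G.edge v (A.piecewise fA f v) := fun v hv ho => by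
      by_cases hvA : v ∈ A
      · rw [piecewise_eq_of_mem _ _ _ hvA]
        exact hfA.edge v (hS.exists_edge v hv)
      · rw [piecewise_eq_of_notMem _ _ _ hvA]
        exact (hH.edge_strat v ⟨hv, hvA⟩ ho).1
    exact ⟨hedge, fun v hv ho => hS.mem_of_edge v hv _ (hedge v hv ho),
      fun v hv _ => hS.mem_of_edge v hv⟩
  refine ⟨A.piecewise fA f, { hconf with wins := fun ρ hρ h0 => ?_ }⟩
  have hmem := hconf.mem hρ h0
  by_cases hinf : ∃ᶠ i in atTop, ρ i ∈ A
  · exact hρ.winsParity_of_frequently_mem_atr hfA (A.piecewise_eqOn fA f)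
      (fun i => hp _ (hmem i)) hP hinf
  · obtain ⟨K, hK⟩ := eventually_atTop.1 (not_frequently.1 hinf)
    have hout : ∀ i, ρ (i + K) ∉ A := fun i => hK _ (Nat.le_add_left K i)
    have hρH := ((hρ.shift K).congr (D := Aᶜ) hout (A.piecewise_eqOn_compl fA f)).restrict hout
    refine (winsParity_shift_iff K).1 (hH.wins _ hρH ⟨?_, by simpa using hout 0⟩)
    simpa using hmem K

def PositionallyDetermined (G : PGame V) (S : Set V) : Prop :=
  ∀ P, ∃ X ⊆ S, (∃ f, PosDominion G P f X) ∧ ∃ g, PosDominion G (!P) g (S \ X)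

theorem PositionallyDetermined.of_split {S X : Set V} (P : Bool) (hXS : X ⊆ S)
    (hX : PosDominion G P f X) (hY : PosDominion G (!P) g (S \ X)) :
    PositionallyDetermined G S := by
  intro P'
  rcases Bool.eq_or_eq_not P' P with rfl | rfl
  · exact ⟨X, hXS, ⟨f, hX⟩, g, hY⟩
  · refine ⟨S \ X, sdiff_subset, ⟨g, hY⟩, f, ?_⟩
    rwa [Bool.not_not, sdiff_sdiff_cancel_left hXS]

/-- Zielonka's second case: `!P` wins on its attractor to `Y`, and the rest of `S` is solved
recursively. -/
theorem PositionallyDetermined.of_opponent_dominion [Finite V] {S Y : Set V}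
    (hS : IsArena G S) (hY : PosDominion (G.restrict (Atr G P N)) (!P) g Y)
    (hYS : Y ⊆ S \ Atr G P N)
    (hrest : PositionallyDetermined (G.restrict (Atr G (!P) Y)) (S \ Atr G (!P) Y)) :
    PositionallyDetermined G S := by
  classical
  set B := Atr G (!P) Y
  have hYG : PosDominion G (!P) g Y :=
    hY.of_restrict (fun v hv => (hYS hv).2) fun v hv ho u hu =>
      notMem_atr_of_edge hv (Bool.ne_not.1 ho) hu
  obtain ⟨fA, hfA⟩ := exists_isAttrStrategy G (!P) Y
  obtain ⟨X, hXS, ⟨f₂, hX⟩, g₂, hZ⟩ := hrest P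
  have hXG : PosDominion G P f₂ X :=
    hX.of_restrict (fun v hv => (hXS hv).2) fun v hv ho u hu =>
      notMem_atr_of_edge hv (Bool.eq_not.2 ho) hu
  have hBZ := ((hYG.atr hfA).union_restrict hZ).inter hS.mem_of_edge
  have hset : (B ∪ (S \ B) \ X) ∩ S = S \ X := by
    ext v
    have := @hXS v
    simp only [mem_inter_iff, mem_union, Set.mem_sdiff] at this ⊢
    tauto
  exact .of_split P (hXS.trans sdiff_subset) hXG (hset ▸ hBZ)

theorem IsArena.positionallyDetermined [Finite V] {S : Set V} (hS : IsArena G S) :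
    PositionallyDetermined G S := by
  induction S using WellFoundedLT.induction generalizing G with
  | _ S ih =>
  rcases S.eq_empty_or_nonempty with rfl | hne
  · exact .of_split true subset_rfl (.empty G true id) (by simpa using PosDominion.empty G false id)
  obtain ⟨v₀, hv₀, hmax⟩ := S.exists_max_image G.prio S.toFinite hne
  set p := G.prio v₀
  set P := decide (p % 2 = 0)
  have hP : p % 2 = if P then 0 else 1 := by
    rcases Nat.mod_two_eq_zero_or_one p with h | h <;> simp [P, h]
  set A := Atr G P {v | G.prio v = p}
  have hA : S \ A < S := sdiff_ssubset_left_iff.2 ⟨v₀, hv₀, subset_atr rfl⟩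
  obtain ⟨X, hXS, ⟨f, hX⟩, g, hY⟩ := ih _ hA hS.restrict_atr P
  rcases ((S \ A) \ X).eq_empty_or_nonempty with hY₀ | ⟨w, hw⟩
  · obtain ⟨f', hf'⟩ := exists_posDominion_of_top_attractor hS hmax hP
      (hXS.antisymm (sdiff_eq_empty.1 hY₀) ▸ hX)
    exact .of_split P subset_rfl hf' (by simpa using PosDominion.empty G (!P) id)
  · refine .of_opponent_dominion hS hY sdiff_subset (ih _ ?_ hS.restrict_atr)
    exact sdiff_ssubset_left_iff.2 ⟨w, hw.1.1, subset_atr hw⟩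

end PGame

theorem zielonka_step_general {V : Type*} [Fintype V]
    (G : PGame V) (hsucc : ∀ v, ∃ u, G.edge v u)
    (h : ℕ) (hEven : Even h)
    (hmax : ∀ v, G.prio v ≤ h)
    (hWO : PGame.WinRegion
        (G.restrict (PGame.Atr G true {v | G.prio v = h})) false
      ⊆ PGame.Atr G true {v | G.prio v = h}) :
    ∀ v : V, v ∈ PGame.WinRegion G true := by
  set A := PGame.Atr G true {v | G.prio v = h}
  have hG : G.IsArena univ := ⟨fun _ _ _ _ => trivial, fun v _ => hsucc v⟩
  obtain ⟨X, hXS, ⟨f, hX⟩, g, hY⟩ := hG.restrict_atr.positionallyDetermined true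
  have hY₀ : (univ \ A) \ X = ∅ :=
    eq_empty_of_forall_notMem fun v hv => hv.1.2 (hWO (hY.subset_winRegion hv))
  obtain ⟨σ, hσ⟩ := PGame.exists_posDominion_of_top_attractor hG (fun v _ => hmax v)
    (by simpa using Nat.even_iff.1 hEven) (hXS.antisymm (sdiff_eq_empty.1 hY₀) ▸ hX)
  exact fun v => hσ.subset_winRegion (mem_univ v)

/-- Zielonka decomposition step: if `h` is the (even) highest priority of `G`,
`A` is Even's attractor of the nodes of priority `h`, and Odd wins nowhere in
the subgame `H = G \ A` (i.e. Odd's winning region of `H` contains no node of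
`H`), then Even wins from every node of `G`.
(Here `true` denotes Even and `false` denotes Odd.) -/
theorem zielonka_step {V : Type*} [Fintype V]
    (G : PGame V) (hsucc : ∀ v, ∃ u, G.edge v u)
    (hnoself : ∀ v, ¬ G.edge v v) (h : ℕ) (hEven : Even h)
    (hmax : ∀ v, G.prio v ≤ h)
    (hWO : PGame.WinRegion
        (G.restrict (PGame.Atr G true {v | G.prio v = h})) false
      ⊆ PGame.Atr G true {v | G.prio v = h}) :
    ∀ v : V, v ∈ PGame.WinRegion G true :=
  zielonka_step_general G hsucc h hEven hmax hWO
end
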